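/- For every 1 ≤ i ≤ n, consider the subgraph H_i of G(x,ε) whose edge set consists of all edges of the path π together with the edges (x_k, y_k) for 1 ≤ k < i. Then the distance between x_i and y_i in H_i is strictly greater than 1 + xε; in particular, every x_i–y_i walk in H_i has weight strictly greater than 1 + xε. -/
import Mathlib


open scoped BigOperators

namespace Paper

variable {V : Type*}

/-- The weight of a walk: the sum of its edge weights, with multiplicity. -/
noncomputable def wWalk (w : V → V → ℝ) {G : SimpleGraph V} {u v : V} (p : G.Walk u v) : ℝ :=
  (p.darts.map fun d => w d.toProd.1 d.toProd.2).sum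

/-- The distance between two vertices: the infimum of the weights of walks
between them, `⊤` if there is none. -/
noncomputable def gdist (G : SimpleGraph V) (w : V → V → ℝ) (u v : V) : EReal :=
  ⨅ p : G.Walk u v, (wWalk w p : EReal)

/-- `H` is a `t`-spanner of `G` with respect to the weights `w`. -/
def IsSpanner (G : SimpleGraph V) (w : V → V → ℝ) (H : SimpleGraph V) (t : ℝ) : Prop :=
  H ≤ G ∧ ∀ u v : V, gdist H w u v ≤ (t : EReal) * gdist G w u v

/-- The total weight of the edges of a graph. -/
noncomputable def wGraph (G : SimpleGraph V) (w : V → V → ℝ)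
    (hw : ∀ a b, w a b = w b a) : ℝ :=
  ∑ᶠ e ∈ G.edgeSet, Sym2.lift ⟨w, hw⟩ e

/-- Vertices of the hard instance `G(x,ε)`: `Sum.inl ()` is `z`,
`Sum.inr (Sum.inl i)` is `x_{i+1}`, and `Sum.inr (Sum.inr i)` is `y_{i+1}`. -/
abbrev GrV (n : ℕ) := Unit ⊕ Fin n ⊕ Fin n

/-- The weight `W₀ = 1 + ε - (n-1)xε` of the edge `(x_n, y_1)`. -/
noncomputable def W0 (n : ℕ) (x ε : ℝ) : ℝ := 1 + ε - ((n : ℝ) - 1) * (x * ε)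

/-- Base relation of `G(x,ε)`: rungs `(x_i, y_i)`, path edges `(x_i, x_{i+1})`,
`(y_i, y_{i+1})`, the edge `(x_n, y_1)`, and the edges `(x_n, z)`, `(z, y_1)`. -/
def grRel (n : ℕ) : GrV n → GrV n → Prop
  | Sum.inr (Sum.inl i), Sum.inr (Sum.inr j) => i = j ∨ (i.val = n - 1 ∧ j.val = 0)
  | Sum.inr (Sum.inl i), Sum.inr (Sum.inl j) => j.val = i.val + 1
  | Sum.inr (Sum.inr i), Sum.inr (Sum.inr j) => j.val = i.val + 1
  | Sum.inl _, Sum.inr (Sum.inl i) => i.val = n - 1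
  | Sum.inl _, Sum.inr (Sum.inr j) => j.val = 0
  | _, _ => False

/-- The hard instance `G(x,ε)` for the greedy algorithm. -/
def grG (n : ℕ) : SimpleGraph (GrV n) := SimpleGraph.fromRel (grRel n)

/-- The edge weights of `G(x,ε)`. -/
noncomputable def grW (n : ℕ) (x ε : ℝ) : GrV n → GrV n → ℝ
  | Sum.inr (Sum.inl i), Sum.inr (Sum.inr j) => if i = j then 1 else W0 n x ε
  | Sum.inr (Sum.inr j), Sum.inr (Sum.inl i) => if i = j then 1 else W0 n x ε
  | Sum.inl _, _ => (1 + x * ε) * W0 n x ε / 2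
  | _, Sum.inl _ => (1 + x * ε) * W0 n x ε / 2
  | _, _ => x * ε

lemma grW_symm (n : ℕ) (x ε : ℝ) : ∀ a b : GrV n, grW n x ε a b = grW n x ε b a := by
  rintro (⟨⟩ | a | a) (⟨⟩ | b | b) <;> rfl

/-- Base relation of the subgraph `H_i`: all edges of the path `π` together with the
rungs `(x_k, y_k)` for `1 ≤ k < i` (here `k` is the 1-based index). -/
def hRel3 (n i : ℕ) : GrV n → GrV n → Prop
  | Sum.inr (Sum.inl k), Sum.inr (Sum.inr j) => k = j ∧ k.val + 1 < i
  | Sum.inr (Sum.inl a), Sum.inr (Sum.inl b) => b.val = a.val + 1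
  | Sum.inr (Sum.inr a), Sum.inr (Sum.inr b) => b.val = a.val + 1
  | Sum.inl _, Sum.inr (Sum.inl a) => a.val = n - 1
  | Sum.inl _, Sum.inr (Sum.inr b) => b.val = 0
  | _, _ => False

/-- Potential function used for the lower bound in Statement 3. -/
noncomputable def pot (n i : ℕ) (x ε : ℝ) : GrV n → ℝ
  | Sum.inl _ => (1 + x*ε) * W0 n x ε / 2 + ((i:ℝ) - 1) * (x*ε)
  | Sum.inr (Sum.inl j) =>
      min (((n:ℝ) - 1 - (j.1:ℝ)) * (x*ε) + (1 + x*ε) * W0 n x ε + ((i:ℝ) - 1) * (x*ε))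
          (1 + (x*ε) * (|(j.1:ℝ) + 1 - ((i:ℝ) - 1)| + 1))
  | Sum.inr (Sum.inr j) => |((i:ℝ) - 1) - (j.1:ℝ)| * (x*ε)

/-- Any walk weight is at least the potential drop, for any edge-Lipschitz potential. -/
lemma walk_lb {H : SimpleGraph V} (w : V → V → ℝ) (f : V → ℝ)
    (hf : ∀ u v, H.Adj u v → f u ≤ w u v + f v) :
    ∀ {u v : V} (p : H.Walk u v), f u - f v ≤ wWalk w p := by
  intro u v p
  induction p with
  | nil => simp [wWalk]
  | @cons a b c h p ih =>
      have h1 := hf a b h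
      simp only [wWalk, SimpleGraph.Walk.darts_cons, List.map_cons, List.sum_cons] at *
      linarith

set_option maxHeartbeats 1000000 in
/-- The potential is Lipschitz along each edge of `H_i`. -/
lemma pot_lip (n i : ℕ) (x ε : ℝ) (ha : 0 < x*ε) (hW : 0 ≤ W0 n x ε)
    (hA : ((n:ℝ) - 1) * (x*ε) < 1) (hi1 : 1 ≤ i) (hin : i ≤ n) :
    ∀ u v : GrV n, (SimpleGraph.fromRel (hRel3 n i)).Adj u v →
      pot n i x ε u ≤ grW n x ε u v + pot n i x ε v := by
  have hc : 0 ≤ (1 + x*ε) * W0 n x ε := mul_nonneg (by nlinarith) hW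
  have hi0 : (0:ℝ) ≤ (i:ℝ) - 1 := by
    have : (1:ℝ) ≤ (i:ℝ) := by exact_mod_cast hi1
    linarith
  have hi0n : (i:ℝ) - 1 ≤ (n:ℝ) - 1 := by
    have : (i:ℝ) ≤ (n:ℝ) := by exact_mod_cast hin
    linarith
  have hi0A : ((i:ℝ) - 1) * (x*ε) ≤ ((n:ℝ) - 1) * (x*ε) :=
    mul_le_mul_of_nonneg_right hi0n ha.le
  have hn1 : 1 ≤ n := le_trans hi1 hin
  rintro (⟨⟩ | j | j) (⟨⟩ | k | k) ⟨hne, h | h⟩ <;> simp only [hRel3] at h <;>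
    simp only [pot, grW]
  -- case (z, x_k) : h : k.1 = n - 1
  · have hkn : (k.1:ℝ) ≤ (n:ℝ) - 1 := by
      have : (k.1:ℝ) + 1 ≤ (n:ℝ) := by exact_mod_cast k.2
      linarith
    have hmin : ((i:ℝ) - 1) * (x*ε) ≤
        min (((n:ℝ) - 1 - (k.1:ℝ)) * (x*ε) + (1 + x*ε) * W0 n x ε + ((i:ℝ) - 1) * (x*ε))
          (1 + (x*ε) * (|(k.1:ℝ) + 1 - ((i:ℝ) - 1)| + 1)) := by
      refine le_min ?_ ?_
      · nlinarith [mul_nonneg (by linarith : (0:ℝ) ≤ (n:ℝ) - 1 - (k.1:ℝ)) ha.le]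
      · nlinarith [abs_nonneg ((k.1:ℝ) + 1 - ((i:ℝ) - 1)), ha.le]
    linarith
  -- case (z, y_k) : h : k.1 = 0
  · have hk0 : (k.1:ℝ) = 0 := by exact_mod_cast h
    rw [hk0, sub_zero, abs_of_nonneg hi0]
  -- case (x_j, z) : h : j.1 = n - 1
  · have hj : (j.1:ℝ) = (n:ℝ) - 1 := by
      have h' : j.1 = n - 1 := h
      have : ((n:ℕ) - 1 : ℕ) = n - 1 := rfl
      rw [h']
      push_cast [Nat.cast_sub hn1]
      ring
    have h1 := min_le_left (((n:ℝ) - 1 - (j.1:ℝ)) * (x*ε) + (1 + x*ε) * W0 n x ε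
        + ((i:ℝ) - 1) * (x*ε)) (1 + (x*ε) * (|(j.1:ℝ) + 1 - ((i:ℝ) - 1)| + 1))
    have h2 : ((n:ℝ) - 1 - (j.1:ℝ)) * (x*ε) = 0 := by rw [hj]; ring
    linarith
  -- case (x_j, x_k) : h : k.1 = j.1 + 1
  · have hk : (k.1:ℝ) = (j.1:ℝ) + 1 := by exact_mod_cast h
    rw [← min_add_add_left]
    refine min_le_min ?_ ?_
    · nlinarith [ha.le]
    · have habs : |(j.1:ℝ) + 1 - ((i:ℝ) - 1)| ≤ 1 + |(k.1:ℝ) + 1 - ((i:ℝ) - 1)| := by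
        rcases abs_cases ((j.1:ℝ) + 1 - ((i:ℝ) - 1)) with ⟨e1, e1'⟩ | ⟨e1, e1'⟩ <;>
          rcases abs_cases ((k.1:ℝ) + 1 - ((i:ℝ) - 1)) with ⟨e2, e2'⟩ | ⟨e2, e2'⟩ <;>
          linarith
      nlinarith [mul_le_mul_of_nonneg_left habs ha.le]
  -- case (x_j, x_k) : h : j.1 = k.1 + 1
  · have hk : (j.1:ℝ) = (k.1:ℝ) + 1 := by exact_mod_cast h
    rw [← min_add_add_left]
    refine min_le_min ?_ ?_
    · nlinarith [ha.le]
    · have habs : |(j.1:ℝ) + 1 - ((i:ℝ) - 1)| ≤ 1 + |(k.1:ℝ) + 1 - ((i:ℝ) - 1)| := by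
        rcases abs_cases ((j.1:ℝ) + 1 - ((i:ℝ) - 1)) with ⟨e1, e1'⟩ | ⟨e1, e1'⟩ <;>
          rcases abs_cases ((k.1:ℝ) + 1 - ((i:ℝ) - 1)) with ⟨e2, e2'⟩ | ⟨e2, e2'⟩ <;>
          linarith
      nlinarith [mul_le_mul_of_nonneg_left habs ha.le]
  -- case (x_j, y_k) : h : j = k ∧ j.1 + 1 < i
  · obtain ⟨rfl, hlt⟩ := h
    rw [if_pos rfl]
    have hlt' : (j.1:ℝ) + 1 ≤ (i:ℝ) - 1 := by
      have : (j.1:ℝ) + 2 ≤ (i:ℝ) := by exact_mod_cast hlt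
      linarith
    have e1 : |(j.1:ℝ) + 1 - ((i:ℝ) - 1)| = ((i:ℝ) - 1) - (j.1:ℝ) - 1 := by
      rw [abs_of_nonpos (by linarith)]; ring
    have e2 : |((i:ℝ) - 1) - (j.1:ℝ)| = ((i:ℝ) - 1) - (j.1:ℝ) :=
      abs_of_nonneg (by linarith)
    rw [e1, e2]
    refine (min_le_right _ _).trans (le_of_eq (by ring))
  -- case (y_j, z) : h : j.1 = 0
  · have hj0 : (j.1:ℝ) = 0 := by exact_mod_cast h
    rw [hj0, sub_zero, abs_of_nonneg hi0]
    linarith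
  -- case (y_j, x_k) : h : k = j ∧ k.1 + 1 < i
  · obtain ⟨rfl, hlt⟩ := h
    rw [if_pos rfl]
    have hkn : (k.1:ℝ) ≤ (n:ℝ) - 1 := by
      have : (k.1:ℝ) + 1 ≤ (n:ℝ) := by exact_mod_cast k.2
      linarith
    have hk0 : (0:ℝ) ≤ (k.1:ℝ) := Nat.cast_nonneg _
    have hmin : (0:ℝ) ≤
        min (((n:ℝ) - 1 - (k.1:ℝ)) * (x*ε) + (1 + x*ε) * W0 n x ε + ((i:ℝ) - 1) * (x*ε))
          (1 + (x*ε) * (|(k.1:ℝ) + 1 - ((i:ℝ) - 1)| + 1)) := by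
      refine le_min ?_ ?_
      · nlinarith [mul_nonneg (by linarith : (0:ℝ) ≤ (n:ℝ) - 1 - (k.1:ℝ)) ha.le]
      · nlinarith [abs_nonneg ((k.1:ℝ) + 1 - ((i:ℝ) - 1)), ha.le]
    have habs : |((i:ℝ) - 1) - (k.1:ℝ)| * (x*ε) ≤ ((n:ℝ) - 1) * (x*ε) := by
      have : |((i:ℝ) - 1) - (k.1:ℝ)| ≤ (n:ℝ) - 1 := by
        rw [abs_le]; constructor <;> linarith
      exact mul_le_mul_of_nonneg_right this ha.le
    linarith
  -- case (y_j, y_k) : h : k.1 = j.1 + 1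
  · have hk : (k.1:ℝ) = (j.1:ℝ) + 1 := by exact_mod_cast h
    have habs : |((i:ℝ) - 1) - (j.1:ℝ)| ≤ 1 + |((i:ℝ) - 1) - (k.1:ℝ)| := by
      rcases abs_cases (((i:ℝ) - 1) - (j.1:ℝ)) with ⟨e1, e1'⟩ | ⟨e1, e1'⟩ <;>
        rcases abs_cases (((i:ℝ) - 1) - (k.1:ℝ)) with ⟨e2, e2'⟩ | ⟨e2, e2'⟩ <;> linarith
    have hm := mul_le_mul_of_nonneg_right habs ha.le
    nlinarith [hm]
  -- case (y_j, y_k) : h : j.1 = k.1 + 1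
  · have hk : (j.1:ℝ) = (k.1:ℝ) + 1 := by exact_mod_cast h
    have habs : |((i:ℝ) - 1) - (j.1:ℝ)| ≤ 1 + |((i:ℝ) - 1) - (k.1:ℝ)| := by
      rcases abs_cases (((i:ℝ) - 1) - (j.1:ℝ)) with ⟨e1, e1'⟩ | ⟨e1, e1'⟩ <;>
        rcases abs_cases (((i:ℝ) - 1) - (k.1:ℝ)) with ⟨e2, e2'⟩ | ⟨e2, e2'⟩ <;> linarith
    have hm := mul_le_mul_of_nonneg_right habs ha.le
    nlinarith [hm]

set_option maxHeartbeats 1000000 in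
/-- in the subgraph `H_i` of `G(x,ε)` consisting of the path `π` together
with the rungs `(x_k, y_k)` for `1 ≤ k < i`, the distance between `x_i` and `y_i`
is strictly greater than `1 + xε`; in particular every `x_i`–`y_i` walk in `H_i` has
weight strictly greater than `1 + xε`. -/
theorem statement3 (x ε : ℝ) (hε0 : 0 < ε) (hε1 : ε < 1/4)
    (hx1 : 1 ≤ x) (hx2 : x ≤ (1/2) * Real.sqrt (1/ε))
    (n : ℕ) (hn : (n : ℤ) = 1 + ⌈1/x + 1/(2 * x^2 * ε)⌉)
    (i : ℕ) (hi1 : 1 ≤ i) (hin : i ≤ n) :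
    (((1 + x * ε : ℝ)) : EReal) <
      gdist (SimpleGraph.fromRel (hRel3 n i)) (grW n x ε)
        (Sum.inr (Sum.inl ⟨i - 1, by omega⟩)) (Sum.inr (Sum.inr ⟨i - 1, by omega⟩)) ∧
    ∀ p : (SimpleGraph.fromRel (hRel3 n i)).Walk
        (Sum.inr (Sum.inl ⟨i - 1, by omega⟩)) (Sum.inr (Sum.inr ⟨i - 1, by omega⟩)),
      1 + x * ε < wWalk (grW n x ε) p := by
  have hx0 : (0:ℝ) < x := lt_of_lt_of_le one_pos hx1
  have ha : 0 < x * ε := mul_pos hx0 hε0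
  -- x² ε ≤ 1/4
  have hs : Real.sqrt (1/ε) ^ 2 = 1/ε := Real.sq_sqrt (by positivity)
  have hsn : 0 ≤ Real.sqrt (1/ε) := Real.sqrt_nonneg _
  have h1 : x^2 ≤ (1/4) * (1/ε) := by nlinarith [hx2, hs, hsn]
  have hsqx : x^2 * ε ≤ 1/4 := by
    have h2 := mul_le_mul_of_nonneg_right h1 hε0.le
    have h3 : (1/4) * (1/ε) * ε = 1/4 := by field_simp
    linarith
  -- n - 1 = ⌈t⌉
  set t : ℝ := 1/x + 1/(2 * x^2 * ε) with ht_def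
  have hceil : ((n:ℝ) - 1) = (⌈t⌉ : ℝ) := by
    have h4 : ((n:ℤ):ℝ) = ((1 + ⌈t⌉ : ℤ) : ℝ) := by exact_mod_cast hn
    push_cast at h4
    linarith
  have hA1 : ((n:ℝ) - 1) * (x*ε) < (t + 1) * (x*ε) := by
    rw [hceil]
    exact mul_lt_mul_of_pos_right (Int.ceil_lt_add_one t) ha
  have hA2 : (t + 1) * (x*ε) = ε + 1/(2*x) + x*ε := by
    rw [ht_def]; field_simp
  have hAub : ((n:ℝ) - 1) * (x*ε) < ε + 1/(2*x) + x*ε := by rw [← hA2]; exact hA1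
  have h2x : 1/(2*x) ≤ 1/2 := by
    rw [div_le_div_iff₀ (by linarith) (by norm_num)]; linarith
  have hxe4 : x*ε ≤ 1/4 := by nlinarith
  have hA : ((n:ℝ) - 1) * (x*ε) < 1 := by linarith
  have hW0 : 0 ≤ W0 n x ε := by unfold W0; linarith
  -- the key gap
  have hsq2 : (x*ε) * (x*ε) ≤ (1/4) * ε := by nlinarith
  have heq : (x*ε) * (1/(2*x)) = ε/2 := by field_simp
  have hgap : 1 + x*ε < ((n:ℝ) - 1) * (x*ε) + (1 + x*ε) * W0 n x ε := by
    unfold W0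
    nlinarith [mul_lt_mul_of_pos_left hAub ha, hsq2, heq, hε0, hε1]
  have hcast : ((i - 1 : ℕ) : ℝ) = (i:ℝ) - 1 := by
    rw [Nat.cast_sub hi1, Nat.cast_one]
  have hlip := pot_lip n i x ε ha hW0 hA hi1 hin
  have hpy : pot n i x ε (Sum.inr (Sum.inr ⟨i - 1, by omega⟩)) = 0 := by
    simp [pot, hcast]
  have hpx : 1 + x*ε < pot n i x ε (Sum.inr (Sum.inl ⟨i - 1, by omega⟩)) := by
    simp only [pot]
    rw [show ((⟨i - 1, by omega⟩ : Fin n).1 : ℝ) = (i:ℝ) - 1 from hcast]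
    refine lt_min ?_ ?_
    · nlinarith [hgap]
    · rw [add_sub_cancel_left, abs_one]
      nlinarith [ha]
  have hbound : ∀ p : (SimpleGraph.fromRel (hRel3 n i)).Walk
      (Sum.inr (Sum.inl ⟨i - 1, by omega⟩)) (Sum.inr (Sum.inr ⟨i - 1, by omega⟩)),
      1 + x * ε < wWalk (grW n x ε) p := by
    intro p
    have h5 := walk_lb (grW n x ε) (pot n i x ε) hlip p
    rw [hpy] at h5
    linarith
  refine ⟨?_, hbound⟩
  simp only [gdist]
  have hle : ((pot n i x ε (Sum.inr (Sum.inl ⟨i - 1, by omega⟩)) : ℝ) : EReal) ≤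
      ⨅ p : (SimpleGraph.fromRel (hRel3 n i)).Walk
        (Sum.inr (Sum.inl ⟨i - 1, by omega⟩)) (Sum.inr (Sum.inr ⟨i - 1, by omega⟩)),
        ((wWalk (grW n x ε) p : ℝ) : EReal) := by
    refine le_iInf fun p => ?_
    have h5 := walk_lb (grW n x ε) (pot n i x ε) hlip p
    rw [hpy] at h5
    exact EReal.coe_le_coe_iff.mpr (by linarith)
  exact lt_of_lt_of_le (EReal.coe_lt_coe_iff.mpr hpx) hle

end Paper
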